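/- arXiv:1003.3329 — 2 statements merged into one kernel-verified Lean document; each statement's English description precedes it below -/
import Mathlib

section
/- For 1 < k < n-1, every maximal clique of the Grassmann graph Γ_k(V) is either a star [M⟩_k = {S ∈ G_k(V) : M ⊂ S} for some (k-1)-dimensional subspace M, or a top ⟨N]_k = {S ∈ G_k(V) : S ⊂ N} for some (k+1)-dimensional subspace N. -/
/-!
Two adjacent members `S`, `U` of a maximal clique determine `M = S ⊓ U` and `N = S ⊔ U`.
Any further member `T` meets `S` and `U` in hyperplanes of `T`: if these coincide they equal `M`,
otherwise they span `T`, which then lies in `N`. A member containing `M` but not inside `N` meets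
`N` exactly in `M`, hence meets every member inside `N` in `M`. So the clique lies in the star
of `M` or in the top of `N`, and maximality turns the inclusion into an equality.
-/

open Module

/-- The Grassmann graph `Γ_k(V)`. -/
def GrassmannGraph (K V : Type*) [DivisionRing K] [AddCommGroup V] [Module K V] (k : ℕ) :
    SimpleGraph {S : Submodule K V // finrank K S = k} where
  Adj S U := S ≠ U ∧ finrank K ↥(S.1 ⊓ U.1) = k - 1
  symm := ⟨by
    rintro S U ⟨h1, h2⟩
    refine ⟨h1.symm, ?_⟩
    rwa [inf_comm]⟩
  loopless := ⟨by rintro S ⟨h, -⟩; exact h rfl⟩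

namespace Submodule

variable {K V : Type*} [DivisionRing K] [AddCommGroup V] [Module K V]

theorem exists_le_finrank_eq (W : Submodule K V) {m : ℕ}
    (hm : m ≤ finrank K W) : ∃ W' ≤ W, finrank K W' = m := by
  obtain ⟨f, hf⟩ := exists_linearIndependent_of_le_finrank hm
  refine ⟨span K (Set.range (W.subtype ∘ f)), ?_, ?_⟩
  · rw [span_le]
    rintro _ ⟨i, rfl⟩
    exact (f i).2
  · rw [finrank_span_eq_card (hf.map' W.subtype W.ker_subtype), Fintype.card_fin]

theorem covBy_of_finrank_eq_add_one [FiniteDimensional K V] {A B : Submodule K V} (hAB : A ≤ B)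
    (h : finrank K B = finrank K A + 1) : A ⋖ B :=
  ⟨lt_of_le_of_ne hAB (by rintro rfl; omega), fun X hAX hXB => by
    have := finrank_lt_finrank_of_lt hAX
    have := finrank_lt_finrank_of_lt hXB
    omega⟩

end Submodule

namespace SimpleGraph

theorem exists_adj_mem_of_maximal {α : Type*} [Nonempty α] {G : SimpleGraph α}
    (hG : ∀ v, ∃ w, G.Adj v w) {C : Set α} (hC : G.IsClique C)
    (hmax : ∀ D, G.IsClique D → C ⊆ D → C = D) : ∃ S ∈ C, ∃ U ∈ C, G.Adj S U := by
  obtain ⟨S, hS⟩ : C.Nonempty := by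
    obtain ⟨v⟩ := ‹Nonempty α›
    rw [Set.nonempty_iff_ne_empty]
    rintro rfl
    exact Set.singleton_ne_empty v (hmax {v} (isClique_singleton v) (Set.empty_subset _)).symm
  by_cases hT : ∃ T ∈ C, T ≠ S
  · obtain ⟨T, hT, hTS⟩ := hT
    exact ⟨S, hS, T, hT, hC hS hT hTS.symm⟩
  · push Not at hT
    obtain ⟨U, hSU⟩ := hG S
    have hCSU : C = {S, U} :=
      hmax _ (isClique_pair.mpr fun _ => hSU) fun T hT' => Or.inl (hT T hT')
    exact absurd (hT U (hCSU ▸ Or.inr rfl)) hSU.ne.symm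

end SimpleGraph

namespace GrassmannGraph

open Submodule

variable {K V : Type*} [DivisionRing K] [AddCommGroup V] [Module K V] [FiniteDimensional K V]
  {k : ℕ}

theorem finrank_sup_of_adj {S U : {S : Submodule K V // finrank K S = k}}
    (h : (GrassmannGraph K V k).Adj S U) (hk : 0 < k) : finrank K ↥(S.1 ⊔ U.1) = k + 1 := by
  have := finrank_sup_add_finrank_inf_eq S.1 U.1
  rw [S.2, U.2, h.2] at this
  omega

theorem exists_adj (S : {S : Submodule K V // finrank K S = k}) (hk : 0 < k)
    (hkn : k < finrank K V) : ∃ U, (GrassmannGraph K V k).Adj S U := by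
  obtain ⟨H, hHS, hH⟩ := S.1.exists_le_finrank_eq (m := k - 1) (by rw [S.2]; omega)
  obtain ⟨v, -, hvS⟩ := SetLike.exists_of_lt (lt_top_of_finrank_lt_finrank (S.2 ▸ hkn))
  have hUrank : finrank K ↥(H ⊔ K ∙ v) = k := by
    rw [finrank_sup_span_singleton fun hvH => hvS (hHS hvH), hH]
    omega
  have hvU : v ∈ H ⊔ K ∙ v := mem_sup_right (mem_span_singleton_self v)
  refine ⟨⟨H ⊔ K ∙ v, hUrank⟩, fun h => hvS (by rw [h]; exact hvU), ?_⟩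
  have hcov : H ⋖ H ⊔ K ∙ v := covBy_of_finrank_eq_add_one le_sup_left (by omega)
  rcases hcov.eq_or_eq (le_inf hHS le_sup_left) inf_le_right with h | h
  · rw [h, hH]
  · exact absurd (inf_eq_right.mp h hvU) hvS

theorem isClique_star (M : Submodule K V) (hM : finrank K M = k - 1) (hk : 0 < k) :
    (GrassmannGraph K V k).IsClique {S | M ≤ S.1} := by
  rintro S hS U hU hne
  refine ⟨hne, ?_⟩
  have hcov : M ⋖ S.1 := covBy_of_finrank_eq_add_one hS (by rw [S.2, hM]; omega)
  rcases hcov.eq_or_eq (le_inf hS hU) inf_le_left with h | h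
  · rw [h, hM]
  · exact absurd (Subtype.ext (eq_of_le_of_finrank_eq (inf_eq_left.mp h) (S.2.trans U.2.symm)))
      hne

theorem isClique_top (N : Submodule K V) (hN : finrank K N = k + 1) :
    (GrassmannGraph K V k).IsClique {S | S.1 ≤ N} := by
  rintro S hS U hU hne
  refine ⟨hne, ?_⟩
  have hcov : S.1 ⋖ N := covBy_of_finrank_eq_add_one hS (by rw [S.2, hN])
  rcases hcov.eq_or_eq le_sup_left (sup_le hS hU) with h | h
  · exact absurd (Subtype.ext (eq_of_le_of_finrank_eq (sup_eq_left.mp h) (U.2.trans S.2.symm))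
      |>.symm) hne
  · have := finrank_sup_add_finrank_inf_eq S.1 U.1
    rw [h, hN, S.2, U.2] at this
    omega

variable {S U T T' : {S : Submodule K V // finrank K S = k}}

theorem inf_le_or_le_sup_of_adj (hSU : (GrassmannGraph K V k).Adj S U)
    (hTS : (GrassmannGraph K V k).Adj T S) (hTU : (GrassmannGraph K V k).Adj T U) (hk : 0 < k) :
    S.1 ⊓ U.1 ≤ T.1 ∨ T.1 ≤ S.1 ⊔ U.1 := by
  by_cases h : T.1 ⊓ S.1 = T.1 ⊓ U.1
  · left
    have hle : T.1 ⊓ S.1 ≤ S.1 ⊓ U.1 := le_inf inf_le_right (h ▸ inf_le_right)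
    exact eq_of_le_of_finrank_eq hle (hTS.2.trans hSU.2.symm) ▸ inf_le_left
  · right
    have hcov : T.1 ⊓ S.1 ⋖ T.1 :=
      covBy_of_finrank_eq_add_one inf_le_left (by rw [T.2, hTS.2]; omega)
    have hspan : T.1 ⊓ S.1 ⊔ T.1 ⊓ U.1 = T.1 :=
      (hcov.eq_or_eq le_sup_left (sup_le inf_le_left inf_le_left)).resolve_left fun h' =>
        h (eq_of_le_of_finrank_eq (sup_eq_left.mp h') (hTU.2.trans hTS.2.symm)).symm
    exact hspan ▸ sup_le_sup inf_le_right inf_le_right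

theorem inf_le_of_adj_of_not_le_sup (hSU : (GrassmannGraph K V k).Adj S U)
    (hTT' : (GrassmannGraph K V k).Adj T T') (hT : T.1 ≤ S.1 ⊔ U.1) (hT' : S.1 ⊓ U.1 ≤ T'.1)
    (hT'N : ¬T'.1 ≤ S.1 ⊔ U.1) (hk : 0 < k) : S.1 ⊓ U.1 ≤ T.1 := by
  have hcov : S.1 ⊓ U.1 ⋖ T'.1 := covBy_of_finrank_eq_add_one hT' (by rw [T'.2, hSU.2]; omega)
  have hT'inf : T'.1 ⊓ (S.1 ⊔ U.1) = S.1 ⊓ U.1 :=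
    (hcov.eq_or_eq (le_inf hT' (inf_le_left.trans le_sup_left)) inf_le_left).resolve_right
      fun h => hT'N (inf_eq_left.mp h)
  have hTT'inf : T.1 ⊓ T'.1 = S.1 ⊓ U.1 :=
    eq_of_le_of_finrank_eq (hT'inf ▸ le_inf inf_le_right (inf_le_left.trans hT))
      (hTT'.2.trans hSU.2.symm)
  exact hTT'inf ▸ inf_le_left

theorem subset_star_or_subset_top {C : Set {S : Submodule K V // finrank K S = k}}
    (hC : (GrassmannGraph K V k).IsClique C) (hS : S ∈ C) (hU : U ∈ C)
    (hSU : (GrassmannGraph K V k).Adj S U) (hk : 0 < k) :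
    C ⊆ {T | S.1 ⊓ U.1 ≤ T.1} ∨ C ⊆ {T | T.1 ≤ S.1 ⊔ U.1} := by
  have key : ∀ T ∈ C, S.1 ⊓ U.1 ≤ T.1 ∨ T.1 ≤ S.1 ⊔ U.1 := by
    intro T hT
    by_cases hTS : T = S
    · exact Or.inl (hTS ▸ inf_le_left)
    by_cases hTU : T = U
    · exact Or.inl (hTU ▸ inf_le_right)
    exact inf_le_or_le_sup_of_adj hSU (hC hT hS hTS) (hC hT hU hTU) hk
  by_contra h
  simp only [not_or, Set.not_subset] at h
  obtain ⟨⟨T, hT, hMT⟩, ⟨T', hT', hT'N⟩⟩ := h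
  have hTN := (key T hT).resolve_left hMT
  have hMT' := (key T' hT').resolve_right hT'N
  have hTT' : T ≠ T' := fun h => hMT (h ▸ hMT')
  exact hMT (inf_le_of_adj_of_not_le_sup hSU (hC hT hT' hTT') hTN hMT' hT'N hk)

end GrassmannGraph

theorem stmt10_general (K V : Type*) [DivisionRing K] [AddCommGroup V] [Module K V]
    [FiniteDimensional K V] (n k : ℕ) (hn : finrank K V = n)
    (hk1 : 1 < k) (hk2 : k < n - 1)
    (C : Set {S : Submodule K V // finrank K S = k})
    (hC : (GrassmannGraph K V k).IsClique C)
    (hmax : ∀ D, (GrassmannGraph K V k).IsClique D → C ⊆ D → C = D) :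
    (∃ M : Submodule K V, finrank K ↥M = k - 1 ∧ C = {S | M ≤ S.1}) ∨
    (∃ N : Submodule K V, finrank K ↥N = k + 1 ∧ C = {S | S.1 ≤ N}) := by
  have hk : 0 < k := by omega
  have hkn : k < finrank K V := by omega
  obtain ⟨S₀, -, hS₀⟩ :=
    (⊤ : Submodule K V).exists_le_finrank_eq (m := k) (by rw [finrank_top]; omega)
  have : Nonempty {S : Submodule K V // finrank K S = k} := ⟨⟨S₀, hS₀⟩⟩
  obtain ⟨S, hS, U, hU, hSU⟩ :=
    SimpleGraph.exists_adj_mem_of_maximal (fun S => GrassmannGraph.exists_adj S hk hkn) hC hmax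
  have hN := GrassmannGraph.finrank_sup_of_adj hSU hk
  rcases GrassmannGraph.subset_star_or_subset_top hC hS hU hSU hk with h | h
  · exact Or.inl ⟨_, hSU.2, hmax _ (GrassmannGraph.isClique_star _ hSU.2 hk) h⟩
  · exact Or.inr ⟨_, hN, hmax _ (GrassmannGraph.isClique_top _ hN) h⟩

theorem stmt10 (K V : Type*) [DivisionRing K] [AddCommGroup V] [Module K V]
    [FiniteDimensional K V] (n k : ℕ) (hn : finrank K V = n) (hn4 : 4 ≤ n)
    (hk1 : 1 < k) (hk2 : k < n - 1)
    (C : Set {S : Submodule K V // finrank K S = k})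
    (hC : (GrassmannGraph K V k).IsClique C)
    (hmax : ∀ D, (GrassmannGraph K V k).IsClique D → C ⊆ D → C = D) :
    (∃ M : Submodule K V, finrank K ↥M = k - 1 ∧ C = {S | M ≤ S.1}) ∨
    (∃ N : Submodule K V, finrank K ↥N = k + 1 ∧ C = {S | S.1 ≤ N}) :=
  stmt10_general K V n k hn hk1 hk2 C hC hmax
end

section
/- If n ≠ 2m, then every automorphism of the Johnson graph J(n,m) is induced by a permutation of the underlying n-element set. -/
/-- The Johnson graph `J(n,m)`. -/
def JohnsonGraph (n m : ℕ) : SimpleGraph {A : Finset (Fin n) // A.card = m} where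
  Adj A B := A ≠ B ∧ (A.1 ∩ B.1).card = m - 1
  symm := by
    constructor
    rintro A B ⟨h1, h2⟩
    refine ⟨h1.symm, ?_⟩
    rwa [Finset.inter_comm]
  loopless := by constructor; rintro A ⟨h, -⟩; exact h rfl

/-!
For `2m < n` we induct on `m`. The `(k+1)`-sets containing a fixed `k`-set `C` (the star of `C`)
form a clique of size `n - k` in `J(n, k+1)`. A family of `(k+1)`-sets meeting pairwise in `k`
points either has a common `k`-subset or lies inside a single `(k+2)`-set, and the latter is
impossible for more than `k + 2` members. Hence when `n - k ≥ k + 3` an automorphism `φ` of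
`J(n, k+1)` maps the star of `C` onto the star of some `k`-set `ψ C`, and `ψ` is an automorphism
of `J(n, k)`, because two `k`-sets are adjacent iff their stars meet. If `ψ` is induced by a
permutation `σ`, so is `φ`, since a `(k+1)`-set is the union of its `k`-subsets. For `2m > n`,
complementation `J(n, m) ≃ J(n, n - m)` reduces to the first case.
-/

open Finset

namespace Finset

variable {α : Type*} [DecidableEq α] {k : ℕ}

theorem card_inter_lt_of_card_eq_of_ne {A B : Finset α} (hA : #A = k) (hB : #B = k)
    (hAB : A ≠ B) : #(A ∩ B) < k := by
  by_contra! h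
  have hA' : A ∩ B = A := eq_of_subset_of_card_le inter_subset_left (by omega)
  have hB' : A ∩ B = B := eq_of_subset_of_card_le inter_subset_right (by omega)
  exact hAB (hA'.symm.trans hB')

theorem inter_subset_or_subset_union {A B D : Finset α} (hD : #D = k + 1) (hAB : #(A ∩ B) = k)
    (hDA : #(D ∩ A) = k) (hDB : #(D ∩ B) = k) : A ∩ B ⊆ D ∨ D ⊆ A ∪ B := by
  refine or_iff_not_imp_left.mpr fun hABD => ?_
  by_contra hDAB
  have hlt : #(D ∩ (A ∩ B)) < k :=
    hAB ▸ card_lt_card (inter_subset_right.ssubset_of_not_subset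
      fun h => hABD (h.trans inter_subset_left))
  have hlt' : #(D ∩ (A ∪ B)) < k + 1 :=
    hD ▸ card_lt_card (inter_subset_left.ssubset_of_not_subset
      fun h => hDAB (h.trans inter_subset_right))
  have := card_union_add_card_inter (D ∩ A) (D ∩ B)
  rw [← inter_union_distrib_left, ← inter_inter_distrib_left] at this
  omega

theorem exists_subset_of_pairwise_card_inter {F : Finset (Finset α)} (hF : ∀ A ∈ F, #A = k + 1)
    (hpair : (F : Set (Finset α)).Pairwise fun A B => #(A ∩ B) = k) (hcard : k + 3 ≤ #F) :
    ∃ C, #C = k ∧ ∀ A ∈ F, C ⊆ A := by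
  obtain ⟨A, hA, B, hB, hAB⟩ := one_lt_card.mp (by omega : 1 < #F)
  by_contra! hstar
  obtain ⟨D, hD, hABD⟩ := hstar (A ∩ B) (hpair hA hB hAB)
  have hDA : D ≠ A := by rintro rfl; exact hABD inter_subset_left
  have hDB : D ≠ B := by rintro rfl; exact hABD inter_subset_right
  have hDU : D ⊆ A ∪ B :=
    (inter_subset_or_subset_union (hF D hD) (hpair hA hB hAB) (hpair hD hA hDA)
      (hpair hD hB hDB)).resolve_left hABD
  have hFU : ∀ E ∈ F, E ⊆ A ∪ B := by
    intro E hE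
    by_contra hEU
    have hEA : E ≠ A := by rintro rfl; exact hEU subset_union_left
    have hEB : E ≠ B := by rintro rfl; exact hEU subset_union_right
    have hED : E ≠ D := by rintro rfl; exact hEU hDU
    have hABE := (inter_subset_or_subset_union (hF E hE) (hpair hA hB hAB) (hpair hE hA hEA)
      (hpair hE hB hEB)).resolve_right hEU
    have hADE := (inter_subset_or_subset_union (hF E hE) (hpair hA hD hDA.symm)
      (hpair hE hA hEA) (hpair hE hD hED)).resolve_right
      fun h => hEU (h.trans (union_subset subset_union_left hDU))
    -- `A ∩ B` and `A ∩ D` are both `k`-subsets of the `k`-set `E ∩ A`, hence equal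
    have hAB_eq : A ∩ B = E ∩ A :=
      eq_of_subset_of_card_le (subset_inter hABE inter_subset_left)
        (by rw [hpair hE hA hEA, hpair hA hB hAB])
    have hAD_eq : A ∩ D = E ∩ A :=
      eq_of_subset_of_card_le (subset_inter hADE inter_subset_left)
        (by rw [hpair hE hA hEA, hpair hA hD hDA.symm])
    exact hABD (hAB_eq.trans hAD_eq.symm ▸ inter_subset_right)
  have := card_le_card fun E hE => mem_powersetCard.mpr ⟨hFU E hE, hF E hE⟩
  have hU : #(A ∪ B) = k + 2 := by
    have := card_union_add_card_inter A B
    rw [hF A hA, hF B hB, hpair hA hB hAB] at this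
    omega
  rw [card_powersetCard, hU, Nat.choose_succ_self_right] at this
  omega

theorem image_compl_perm [Fintype α] (σ : Equiv.Perm α) (s : Finset α) :
    sᶜ.image σ = (s.image σ)ᶜ := by
  ext x
  simp [← Equiv.eq_symm_apply]

end Finset

namespace JohnsonGraph

variable {n k : ℕ}

def star (k : ℕ) (C : Finset (Fin n)) : Finset {A : Finset (Fin n) // #A = k + 1} :=
  univ.filter fun A => C ⊆ A.1

@[simp]
theorem mem_star {C : Finset (Fin n)} {A : {A : Finset (Fin n) // #A = k + 1}} :
    A ∈ star k C ↔ C ⊆ A.1 := by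
  simp [star]

theorem card_star {C : Finset (Fin n)} (hC : #C = k) : #(star k C) = n - k := by
  have hcompl : #Cᶜ = n - k := by rw [card_compl, Fintype.card_fin, hC]
  rw [← hcompl]
  symm
  refine card_bij (fun a ha => ⟨insert a C, by rw [card_insert_of_notMem (mem_compl.mp ha), hC]⟩)
    (fun a _ => mem_star.mpr (subset_insert a C)) ?_ ?_
  · intro a ha b _ hab
    have hab' : insert a C = insert b C := congrArg Subtype.val hab
    have : a ∈ insert b C := hab' ▸ mem_insert_self a C
    exact (mem_insert.mp this).resolve_right (mem_compl.mp ha)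
  · intro A hA
    have hCA := mem_star.mp hA
    obtain ⟨a, ha⟩ : (A.1 \ C).Nonempty := by
      rw [← card_pos, card_sdiff_of_subset hCA, A.2, hC]
      omega
    obtain ⟨haA, haC⟩ := mem_sdiff.mp ha
    refine ⟨a, mem_compl.mpr haC, Subtype.ext (eq_of_subset_of_card_le
      (insert_subset haA hCA) ?_)⟩
    rw [card_insert_of_notMem haC, hC, A.2]

theorem inter_eq_of_mem_star {C : Finset (Fin n)} (hC : #C = k)
    {A B : {A : Finset (Fin n) // #A = k + 1}} (hA : A ∈ star k C) (hB : B ∈ star k C)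
    (hAB : A ≠ B) : A.1 ∩ B.1 = C :=
  (eq_of_subset_of_card_le (subset_inter (mem_star.mp hA) (mem_star.mp hB))
    (by have := card_inter_lt_of_card_eq_of_ne A.2 B.2 (Subtype.val_injective.ne hAB); omega)).symm

theorem adj_of_mem_star {C : Finset (Fin n)} (hC : #C = k)
    {A B : {A : Finset (Fin n) // #A = k + 1}} (hA : A ∈ star k C) (hB : B ∈ star k C)
    (hAB : A ≠ B) : (JohnsonGraph n (k + 1)).Adj A B :=
  ⟨hAB, by rw [inter_eq_of_mem_star hC hA hB hAB, hC, Nat.add_sub_cancel]⟩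

theorem eq_of_star_eq (hn : k + 2 ≤ n) {C D : Finset (Fin n)} (hC : #C = k) (hD : #D = k)
    (h : star k C = star k D) : C = D := by
  obtain ⟨A, hA, B, hB, hAB⟩ := one_lt_card.mp (by rw [card_star hC]; omega : 1 < #(star k C))
  rw [← inter_eq_of_mem_star hC hA hB hAB, inter_eq_of_mem_star hD (h ▸ hA) (h ▸ hB) hAB]

theorem adj_iff_star_inter_nonempty {C D : {C : Finset (Fin n) // #C = k}} :
    (JohnsonGraph n k).Adj C D ↔ C ≠ D ∧ (star k C.1 ∩ star k D.1).Nonempty := by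
  have hsum := card_union_add_card_inter C.1 D.1
  rw [C.2, D.2] at hsum
  refine ⟨fun ⟨hCD, hcard⟩ => ⟨hCD, ?_⟩, fun ⟨hCD, A, hA⟩ => ⟨hCD, ?_⟩⟩
  · have hlt := card_inter_lt_of_card_eq_of_ne C.2 D.2 (Subtype.val_injective.ne hCD)
    exact ⟨⟨C.1 ∪ D.1, by omega⟩, by simp⟩
  · rw [mem_inter, mem_star, mem_star] at hA
    have hle := card_le_card (union_subset hA.1 hA.2)
    have hlt := card_inter_lt_of_card_eq_of_ne C.2 D.2 (Subtype.val_injective.ne hCD)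
    rw [A.2] at hle
    show #(C.1 ∩ D.1) = k - 1
    omega

def IsShadow (ψ : {C : Finset (Fin n) // #C = k} → {C : Finset (Fin n) // #C = k})
    (φ : {A : Finset (Fin n) // #A = k + 1} → {A : Finset (Fin n) // #A = k + 1}) : Prop :=
  ∀ C A, C.1 ⊆ A.1 → (ψ C).1 ⊆ (φ A).1

section Shadow

variable (φ : JohnsonGraph n (k + 1) ≃g JohnsonGraph n (k + 1))

theorem exists_common_subset_image_star (hn : 2 * k + 3 ≤ n) {C : Finset (Fin n)}
    (hC : #C = k) :
    ∃ C' : Finset (Fin n), #C' = k ∧ ∀ A ∈ star k C, C' ⊆ (φ A).1 := by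
  set F := (star k C).image fun A => (φ A).1
  have hF : ∀ A' ∈ F, #A' = k + 1 := by
    simp only [F, mem_image]
    rintro _ ⟨A, -, rfl⟩
    exact (φ A).2
  have hpair : (F : Set (Finset (Fin n))).Pairwise fun A B => #(A ∩ B) = k := by
    rw [coe_image]
    rintro _ ⟨A, hA, rfl⟩ _ ⟨B, hB, rfl⟩ hAB
    have hAB' : A ≠ B := ne_of_apply_ne (fun A => (φ A).1) hAB
    exact (φ.map_adj_iff.mpr (adj_of_mem_star hC hA hB hAB')).2
  have hcard : k + 3 ≤ #F := by
    rw [card_image_of_injOn fun A _ B _ h => φ.injective (Subtype.ext h), card_star hC]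
    omega
  obtain ⟨C', hC', hsub⟩ := exists_subset_of_pairwise_card_inter hF hpair hcard
  exact ⟨C', hC', fun A hA => hsub _ (mem_image_of_mem _ hA)⟩

variable {φ} {ψ : {C : Finset (Fin n) // #C = k} → {C : Finset (Fin n) // #C = k}}

theorem IsShadow.image_star (hψ : IsShadow ψ φ) (C : {C : Finset (Fin n) // #C = k}) :
    (star k C.1).image φ = star k (ψ C).1 :=
  eq_of_subset_of_card_le
    (image_subset_iff.mpr fun A hA => mem_star.mpr (hψ C A (mem_star.mp hA)))
    (by rw [card_image_of_injective _ φ.injective, card_star C.2, card_star (ψ C).2])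

theorem IsShadow.injective (hψ : IsShadow ψ φ) (hn : k + 2 ≤ n) : Function.Injective ψ := by
  intro C D h
  have hstar : star k C.1 = star k D.1 := by
    apply image_injective φ.injective
    rw [hψ.image_star, hψ.image_star, h]
  exact Subtype.ext (eq_of_star_eq hn C.2 D.2 hstar)

theorem IsShadow.adj_iff (hψ : IsShadow ψ φ) (hn : k + 2 ≤ n)
    (C D : {C : Finset (Fin n) // #C = k}) :
    (JohnsonGraph n k).Adj (ψ C) (ψ D) ↔ (JohnsonGraph n k).Adj C D := by
  rw [adj_iff_star_inter_nonempty, adj_iff_star_inter_nonempty, ← hψ.image_star,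
    ← hψ.image_star, ← image_inter _ _ φ.injective, image_nonempty,
    (hψ.injective hn).ne_iff]

theorem IsShadow.apply_eq_image (hψ : IsShadow ψ φ) (hk : 1 ≤ k) (σ : Equiv.Perm (Fin n))
    (hσ : ∀ C, (ψ C).1 = C.1.image σ) (A : {A : Finset (Fin n) // #A = k + 1}) :
    (φ A).1 = A.1.image σ := by
  refine (eq_of_subset_of_card_le (fun y hy => ?_) ?_).symm
  · obtain ⟨x, hx, rfl⟩ := mem_image.mp hy
    obtain ⟨z, hz, hzx⟩ := exists_mem_ne (by rw [A.2]; omega) x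
    let C : {C : Finset (Fin n) // #C = k} :=
      ⟨A.1.erase z, by rw [card_erase_of_mem hz, A.2, Nat.add_sub_cancel]⟩
    apply hψ C A (erase_subset z A.1)
    rw [hσ C]
    exact mem_image_of_mem σ (mem_erase.mpr ⟨hzx.symm, hx⟩)
  · rw [card_image_of_injective _ σ.injective, A.2, (φ A).2]

end Shadow

theorem exists_isShadow (hn : 2 * k + 3 ≤ n)
    (φ : JohnsonGraph n (k + 1) ≃g JohnsonGraph n (k + 1)) :
    ∃ ψ : JohnsonGraph n k ≃g JohnsonGraph n k, IsShadow ψ φ := by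
  choose ψ hψk hψ using fun C : {C : Finset (Fin n) // #C = k} =>
    exists_common_subset_image_star φ hn C.2
  let ψ' : {C : Finset (Fin n) // #C = k} → {C : Finset (Fin n) // #C = k} :=
    fun C => ⟨ψ C, hψk C⟩
  have hψ' : IsShadow ψ' φ := fun C A h => hψ C A (mem_star.mpr h)
  have hinj := hψ'.injective (by omega)
  exact ⟨⟨Equiv.ofBijective ψ' (Finite.injective_iff_bijective.mp hinj),
    hψ'.adj_iff (by omega) _ _⟩, hψ'⟩

theorem exists_perm_of_card_eq_one (φ : JohnsonGraph n 1 ≃g JohnsonGraph n 1) :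
    ∃ σ : Equiv.Perm (Fin n), ∀ A, (φ A).1 = A.1.image σ := by
  let e : Fin n ≃ {A : Finset (Fin n) // #A = 1} := Equiv.ofBijective
    (fun x => ⟨{x}, card_singleton x⟩)
    ⟨fun x y h => singleton_injective (congrArg Subtype.val h),
      fun A => (card_eq_one.mp A.2).imp fun x hx => Subtype.ext hx.symm⟩
  refine ⟨e.trans (φ.toEquiv.trans e.symm), fun A => ?_⟩
  obtain ⟨x, rfl⟩ := e.surjective A
  change (φ (e x)).1 = ({x} : Finset (Fin n)).image _
  rw [image_singleton]
  exact congrArg Subtype.val (e.apply_symm_apply (φ (e x))).symm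

theorem exists_perm_of_two_mul_lt {m : ℕ} (hm : 1 ≤ m) (hn : 2 * m < n)
    (φ : JohnsonGraph n m ≃g JohnsonGraph n m) :
    ∃ σ : Equiv.Perm (Fin n), ∀ A, (φ A).1 = A.1.image σ := by
  induction m, hm using Nat.le_induction with
  | base => exact exists_perm_of_card_eq_one φ
  | succ k hk ih =>
    obtain ⟨ψ, hψ⟩ := exists_isShadow (by omega) φ
    obtain ⟨σ, hσ⟩ := ih (by omega) ψ
    exact ⟨σ, hψ.apply_eq_image hk σ hσ⟩

def complIso {m : ℕ} (hm : m ≤ n) : JohnsonGraph n m ≃g JohnsonGraph n (n - m) where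
  toFun A := ⟨A.1ᶜ, by rw [card_compl, Fintype.card_fin, A.2]⟩
  invFun B := ⟨B.1ᶜ, by rw [card_compl, Fintype.card_fin, B.2]; omega⟩
  left_inv A := Subtype.ext (compl_compl A.1)
  right_inv B := Subtype.ext (compl_compl B.1)
  map_rel_iff' {A B} := by
    simp only [JohnsonGraph, Equiv.coe_fn_mk, ne_eq, Subtype.mk.injEq, compl_inj_iff,
      ← compl_union, card_compl, Fintype.card_fin, ← Subtype.ext_iff]
    have hsum := card_union_add_card_inter A.1 B.1
    have hle := card_le_univ (A.1 ∪ B.1)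
    rw [A.2, B.2] at hsum
    rw [Fintype.card_fin] at hle
    refine and_congr_right fun hAB => ?_
    have hlt := card_inter_lt_of_card_eq_of_ne A.2 B.2 (Subtype.val_injective.ne hAB)
    omega

@[simp]
theorem coe_complIso_apply {m : ℕ} (hm : m ≤ n) (A : {A : Finset (Fin n) // #A = m}) :
    (complIso hm A).1 = A.1ᶜ :=
  rfl

end JohnsonGraph

theorem stmt15 (n m : ℕ) (hm1 : 1 ≤ m) (hm2 : m ≤ n - 1) (hne : n ≠ 2 * m)
    (φ : JohnsonGraph n m ≃g JohnsonGraph n m) :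
    ∃ σ : Equiv.Perm (Fin n), ∀ A, (φ A).1 = A.1.image σ := by
  rcases lt_or_gt_of_ne hne with h | h
  · have hm : m ≤ n := by omega
    let c := JohnsonGraph.complIso hm
    obtain ⟨σ, hσ⟩ := JohnsonGraph.exists_perm_of_two_mul_lt (m := n - m) (by omega) (by omega)
      ((c.symm.trans φ).trans c)
    exact ⟨σ, fun A => compl_injective (by simpa [c, image_compl_perm] using hσ (c A))⟩
  · exact JohnsonGraph.exists_perm_of_two_mul_lt hm1 h φ
end
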